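/- arXiv:2206.09551 — 4 statements merged into one kernel-verified Lean document; each statement's English description precedes it below -/
import Mathlib

section
/- There exists a Boolean classifier, an instance, background knowledge, and a subset-minimal knowledge-assisted abductive explanation X' such that no subset-minimal abductive explanation X without background knowledge satisfies X ⊇ X'. Concretely: for the classifier τ : {0,1}³ → {0,1} on features {a,b,c} with τ(a,b,c) = 1 iff a + b + c ≥ 2, instance v = (1,1,0), and background knowledge φ = (¬c → a) ∧ (¬c → b), the set {c} is a subset-minimal knowledge-assisted AXp, but the only subset-minimal AXp without knowledge is {a,b}, which does not contain {c}. -/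
/-- counterexample showing a minimal knowledge-assisted AXp need not be
contained in (equivalently, a minimal plain AXp need not contain) a minimal plain AXp.
τ(a,b,c) = 1 iff a+b+c ≥ 2, v = (1,1,0), φ = (¬c → a) ∧ (¬c → b). -/
theorem knowledge_axp_not_extendable :
    ∃ (τ : (Fin 3 → Bool) → Bool) (v : Fin 3 → Bool) (φ : (Fin 3 → Bool) → Prop),
      τ = (fun x => (x 0 && x 1) || (x 0 && x 2) || (x 1 && x 2)) ∧
      v = ![true, true, false] ∧
      φ = (fun x => (x 2 = false → x 0 = true) ∧ (x 2 = false → x 1 = true)) ∧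
      τ v = true ∧
      -- {c} (= {2}) is a knowledge-assisted AXp
      (∀ x, (∀ i ∈ ({2} : Finset (Fin 3)), x i = v i) → (φ x → τ x = true)) ∧
      -- and it is subset-minimal
      (∀ Z ⊂ ({2} : Finset (Fin 3)),
        ¬ (∀ x, (∀ i ∈ Z, x i = v i) → (φ x → τ x = true))) ∧
      -- {a,b} (= {0,1}) is the only subset-minimal plain AXp
      (∀ X : Finset (Fin 3),
        ((∀ x, (∀ i ∈ X, x i = v i) → τ x = true) ∧
         (∀ Z ⊂ X, ¬ (∀ x, (∀ i ∈ Z, x i = v i) → τ x = true))) ↔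
        X = {0, 1}) ∧
      -- and {2} ⊄ {0,1}
      ¬ (({2} : Finset (Fin 3)) ⊆ {0, 1}) := by
  refine ⟨_, _, _, rfl, rfl, rfl, ?_, ?_, ?_, ?_, ?_⟩ <;> decide
end

section
/- For any subset-minimal knowledge-assisted contrastive explanation Y' for prediction τ(v) = c subject to background knowledge φ, there exists a subset-minimal contrastive explanation Y (without background knowledge) such that Y ⊆ Y'. -/
lemma exists_minimal_subset {α : Type*} [DecidableEq α] (P : Finset α → Prop)
    (S : Finset α) (hS : P S) :
    ∃ Y ⊆ S, P Y ∧ ∀ Z ⊂ Y, ¬ P Z := by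
  induction S using Finset.strongInduction with
  | _ S ih =>
    by_cases h : ∃ Z ⊂ S, P Z
    · obtain ⟨Z, hZ, hPZ⟩ := h
      obtain ⟨Y, hYZ, hPY, hmin⟩ := ih Z hZ hPZ
      exact ⟨Y, hYZ.trans hZ.subset, hPY, hmin⟩
    · exact ⟨S, subset_rfl, hS, fun Z hZ hPZ => h ⟨Z, hZ, hPZ⟩⟩

/-- every subset-minimal knowledge-assisted CXp contains a
subset-minimal plain CXp. -/
theorem minimal_cxp_inside_minimal_knowledge_cxp
    {m : ℕ} {D : Fin m → Type} {K : Type}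
    (τ : (∀ i, D i) → K) (v : ∀ i, D i) (c : K)
    (hv : τ v = c)
    (φ : (∀ i, D i) → Prop)
    (Y' : Finset (Fin m))
    (hCXp : ∃ x : ∀ i, D i, (∀ i ∉ Y', x i = v i) ∧ φ x ∧ τ x ≠ c)
    (hmin : ∀ Z ⊂ Y', ¬ (∃ x : ∀ i, D i, (∀ i ∉ Z, x i = v i) ∧ φ x ∧ τ x ≠ c)) :
    ∃ Y ⊆ Y',
      (∃ x : ∀ i, D i, (∀ i ∉ Y, x i = v i) ∧ τ x ≠ c) ∧
      (∀ Z ⊂ Y, ¬ (∃ x : ∀ i, D i, (∀ i ∉ Z, x i = v i) ∧ τ x ≠ c)) := by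
  obtain ⟨x, hx, hφ, hτ⟩ := hCXp
  exact exists_minimal_subset
    (fun Y => ∃ x : ∀ i, D i, (∀ i ∉ Y, x i = v i) ∧ τ x ≠ c) Y' ⟨x, hx, hτ⟩
end

section
/- Minimal hitting set duality with background knowledge: every subset-minimal knowledge-assisted abductive explanation X for prediction τ(v)=c is a minimal hitting set of the collection of all subset-minimal knowledge-assisted contrastive explanations for that prediction, and vice versa, every subset-minimal knowledge-assisted CXp is a minimal hitting set of the collection of all subset-minimal knowledge-assisted AXps. -/
open Classical

lemma exists_min_subset {m : ℕ} (P : Finset (Fin m) → Prop) :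
    ∀ S, P S → ∃ Y, Y ⊆ S ∧ P Y ∧ ∀ Z ⊂ Y, ¬ P Z := by
  intro S
  induction S using Finset.strongInductionOn with
  | _ S ih =>
    intro hS
    by_cases h : ∃ Z, Z ⊂ S ∧ P Z
    · obtain ⟨Z, hZS, hZ⟩ := h
      obtain ⟨Y, hYZ, hPY, hmin⟩ := ih Z hZS hZ
      exact ⟨Y, hYZ.trans hZS.subset, hPY, hmin⟩
    · exact ⟨S, subset_rfl, hS, fun Z hZ hP => h ⟨Z, hZ, hP⟩⟩

/-- minimal hitting set duality between knowledge-assisted AXps and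
knowledge-assisted CXps. -/
theorem knowledge_axp_cxp_hitting_set_duality
    {m : ℕ} {D : Fin m → Type} {K : Type}
    (τ : (∀ i, D i) → K) (v : ∀ i, D i) (c : K)
    (hv : τ v = c)
    (φ : (∀ i, D i) → Prop) (hφv : φ v) :
    -- abbreviations (inlined): knowledge-assisted AXp/CXp conditions
    (∀ X : Finset (Fin m),
      ((∀ x : ∀ i, D i, (∀ i ∈ X, x i = v i) → (φ x → τ x = c)) ∧
       (∀ Z ⊂ X, ¬ (∀ x : ∀ i, D i, (∀ i ∈ Z, x i = v i) → (φ x → τ x = c)))) →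
      -- X hits every subset-minimal knowledge-assisted CXp
      ((∀ Y : Finset (Fin m),
          ((∃ x : ∀ i, D i, (∀ i ∉ Y, x i = v i) ∧ φ x ∧ τ x ≠ c) ∧
           (∀ Z ⊂ Y, ¬ (∃ x : ∀ i, D i, (∀ i ∉ Z, x i = v i) ∧ φ x ∧ τ x ≠ c))) →
          (X ∩ Y).Nonempty) ∧
       -- and minimally so
       (∀ H ⊂ X, ¬ ∀ Y : Finset (Fin m),
          ((∃ x : ∀ i, D i, (∀ i ∉ Y, x i = v i) ∧ φ x ∧ τ x ≠ c) ∧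
           (∀ Z ⊂ Y, ¬ (∃ x : ∀ i, D i, (∀ i ∉ Z, x i = v i) ∧ φ x ∧ τ x ≠ c))) →
          (H ∩ Y).Nonempty)))
    ∧
    (∀ Y : Finset (Fin m),
      ((∃ x : ∀ i, D i, (∀ i ∉ Y, x i = v i) ∧ φ x ∧ τ x ≠ c) ∧
       (∀ Z ⊂ Y, ¬ (∃ x : ∀ i, D i, (∀ i ∉ Z, x i = v i) ∧ φ x ∧ τ x ≠ c))) →
      -- Y hits every subset-minimal knowledge-assisted AXp
      ((∀ X : Finset (Fin m),
          ((∀ x : ∀ i, D i, (∀ i ∈ X, x i = v i) → (φ x → τ x = c)) ∧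
           (∀ Z ⊂ X, ¬ (∀ x : ∀ i, D i, (∀ i ∈ Z, x i = v i) → (φ x → τ x = c)))) →
          (Y ∩ X).Nonempty) ∧
       (∀ H ⊂ Y, ¬ ∀ X : Finset (Fin m),
          ((∀ x : ∀ i, D i, (∀ i ∈ X, x i = v i) → (φ x → τ x = c)) ∧
           (∀ Z ⊂ X, ¬ (∀ x : ∀ i, D i, (∀ i ∈ Z, x i = v i) → (φ x → τ x = c)))) →
          (H ∩ X).Nonempty))) := by
  set WA : Finset (Fin m) → Prop :=
    fun X => ∀ x : ∀ i, D i, (∀ i ∈ X, x i = v i) → (φ x → τ x = c) with hWA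
  set WC : Finset (Fin m) → Prop :=
    fun Y => ∃ x : ∀ i, D i, (∀ i ∉ Y, x i = v i) ∧ φ x ∧ τ x ≠ c with hWC
  -- any weak AXp intersects any weak CXp
  have hit : ∀ X Y, WA X → WC Y → (X ∩ Y).Nonempty := by
    intro X Y hX hY
    by_contra hempty
    rw [Finset.not_nonempty_iff_eq_empty] at hempty
    obtain ⟨x, hxv, hφx, hτx⟩ := hY
    exact hτx (hX x (fun i hiX => hxv i (fun hiY =>
      (Finset.eq_empty_iff_forall_notMem.mp hempty i (Finset.mem_inter.mpr ⟨hiX, hiY⟩)))) hφx)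
  have compl1 : ∀ H : Finset (Fin m), ¬ WA H → WC Hᶜ := by
    intro H hH
    simp only [hWA, not_forall] at hH
    obtain ⟨x, hx1, hx2, hx3⟩ := hH
    exact ⟨x, fun i hi => hx1 i (by simpa using hi), hx2, hx3⟩
  have compl2 : ∀ H : Finset (Fin m), ¬ WC H → WA Hᶜ := by
    intro H hH x hx hφx
    by_contra hτ
    exact hH ⟨x, fun i hi => hx i (Finset.mem_compl.mpr hi), hφx, hτ⟩
  constructor
  · intro X ⟨hXA, hXmin⟩
    constructor
    · intro Y ⟨hYC, _⟩
      exact hit X Y hXA hYC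
    · intro H hHX hall
      have hnA : ¬ WA H := hXmin H hHX
      have hC : WC Hᶜ := compl1 H hnA
      obtain ⟨Y, hYsub, hYC, hYmin⟩ := exists_min_subset WC Hᶜ hC
      obtain ⟨i, hi⟩ := hall Y ⟨hYC, hYmin⟩
      rw [Finset.mem_inter] at hi
      exact (Finset.mem_compl.mp (hYsub hi.2)) hi.1
  · intro Y ⟨hYC, hYmin⟩
    constructor
    · intro X ⟨hXA, _⟩
      obtain ⟨i, hi⟩ := hit X Y hXA hYC
      rw [Finset.mem_inter] at hi
      exact ⟨i, Finset.mem_inter.mpr ⟨hi.2, hi.1⟩⟩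
    · intro H hHY hall
      have hnC : ¬ WC H := hYmin H hHY
      have hA : WA Hᶜ := compl2 H hnC
      obtain ⟨X, hXsub, hXA, hXmin⟩ := exists_min_subset WA Hᶜ hA
      obtain ⟨i, hi⟩ := hall X ⟨hXA, hXmin⟩
      rw [Finset.mem_inter] at hi
      exact (Finset.mem_compl.mp (hXsub hi.2)) hi.1
end

section
/- For the same decision list and instance, {Status} is a plain contrastive explanation (changing Status to Married flips the prediction), but {Status} is not a knowledge-assisted CXp under φ = (Sex=Male ∧ Relationship=Not-in-Family → Status=Separated), whereas {Status, Relationship} is a knowledge-assisted CXp. -/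
namespace Stmt14

inductive Status | married | separated | neverMarried
  deriving DecidableEq
inductive Sex | male | female
  deriving DecidableEq
inductive Rel | husband | wife | notInFamily | unmarried
  deriving DecidableEq
inductive Income | ge50k | lt50k
  deriving DecidableEq

open Status Sex Rel Income

def τ (s : Status) (sx : Sex) (r : Rel) : Income :=
  if s = married then ge50k
  else if sx = male ∧ r ≠ husband then lt50k
  else ge50k

def φ (s : Status) (sx : Sex) (r : Rel) : Prop :=
  sx = male ∧ r = notInFamily → s = separated

/-- for instance v = (Separated, Male, Not-in-Family), {Status} is a
plain CXp but not a knowledge-assisted CXp, while {Status, Relationship} is a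
knowledge-assisted CXp. -/
theorem cxp_example :
    τ separated male notInFamily = lt50k ∧
    -- {Status} is a plain CXp: vary Status, keep Sex and Relationship fixed
    (∃ s, τ s male notInFamily ≠ lt50k) ∧
    -- {Status} is not a knowledge-assisted CXp
    ¬ (∃ s, φ s male notInFamily ∧ τ s male notInFamily ≠ lt50k) ∧
    -- {Status, Relationship} is a knowledge-assisted CXp
    (∃ s r, φ s male r ∧ τ s male r ≠ lt50k) := by
  refine ⟨rfl, ⟨married, by decide⟩, ?_, ⟨married, husband, ?_, by decide⟩⟩
  · rintro ⟨s, hφ, hτ⟩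
    have := hφ ⟨rfl, rfl⟩
    subst this
    exact hτ rfl
  · intro ⟨_, h⟩; cases h

end Stmt14
end
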